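/- (Alice–Bob–Alice, complements: revealing late is optimal.) Let W, X_A, X_B be finitely-valued random variables with X_A and X_B (unconditionally) independent, and let S be any deterministic function of X_A. Then Alice's total expected payment from revealing S(X_A) in stage 1 and the rest of X_A in stage 3 (after Bob reveals X_B) is at most her payment from revealing everything in stage 3: I(S(X_A); W) + I(X_A; W | (X_B, S(X_A))) ≤ I(X_A; W | X_B). -/

import Mathlib

open scoped BigOperators

noncomputable section

variable {Ω : Type*} [Fintype Ω]

/-- `μ` is a probability mass function on the finite sample space `Ω`. -/
def IsPmf (μ : Ω → ℝ) : Prop := (∀ ω, 0 ≤ μ ω) ∧ ∑ ω, μ ω = 1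

open Classical in
/-- Probability of the event `A` under the pmf `μ`. -/
def pr (μ : Ω → ℝ) (A : Ω → Prop) : ℝ := ∑ ω, if A ω then μ ω else 0

/-- Conditional probability of `A` given `B` (with the convention `x / 0 = 0`). -/
def cpr (μ : Ω → ℝ) (A B : Ω → Prop) : ℝ := pr μ (fun ω => A ω ∧ B ω) / pr μ B

open Classical in
/-- Mutual information between the random variables `X` and `Y`,
`I(X;Y) = Σ_{x,y} P[X=x,Y=y] log( P[X=x,Y=y] / (P[X=x]·P[Y=y]) )`. -/
def mi (μ : Ω → ℝ) {S T : Type*} (X : Ω → S) (Y : Ω → T) : ℝ :=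
  ∑ x ∈ Finset.univ.image X, ∑ y ∈ Finset.univ.image Y,
    pr μ (fun ω => X ω = x ∧ Y ω = y) *
      Real.log (pr μ (fun ω => X ω = x ∧ Y ω = y) /
        (pr μ (fun ω => X ω = x) * pr μ (fun ω => Y ω = y)))

open Classical in
/-- Mutual information between `X` and `Y` conditioned on the event `B`,
`I(X;Y|B) = Σ_{x,y} P[X=x,Y=y|B] log( P[X=x,Y=y|B] / (P[X=x|B]·P[Y=y|B]) )`. -/
def miOn (μ : Ω → ℝ) {S T : Type*} (X : Ω → S) (Y : Ω → T) (B : Ω → Prop) : ℝ :=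
  ∑ x ∈ Finset.univ.image X, ∑ y ∈ Finset.univ.image Y,
    cpr μ (fun ω => X ω = x ∧ Y ω = y) B *
      Real.log (cpr μ (fun ω => X ω = x ∧ Y ω = y) B /
        (cpr μ (fun ω => X ω = x) B * cpr μ (fun ω => Y ω = y) B))

open Classical in
/-- Conditional mutual information `I(X;Y|Z) = E_Z[ I(X;Y|Z=z) ]`. -/
def cmi (μ : Ω → ℝ) {S T U : Type*} (X : Ω → S) (Y : Ω → T) (Z : Ω → U) : ℝ :=
  ∑ z ∈ Finset.univ.image Z,
    pr μ (fun ω => Z ω = z) * miOn μ X Y (fun ω => Z ω = z)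

/-- `X` and `Y` are (unconditionally) independent under `μ`. -/
def Indep (μ : Ω → ℝ) {S T : Type*} (X : Ω → S) (Y : Ω → T) : Prop :=
  ∀ (x : S) (y : T),
    pr μ (fun ω => X ω = x ∧ Y ω = y) = pr μ (fun ω => X ω = x) * pr μ (fun ω => Y ω = y)

section AuxPr

/-!
Every information quantity is the expectation of a log-ratio of atom probabilities
`P[Z = Z ω]`. With `S = S'(X_A)`, comparing these log-ratios pointwise gives the chain rule
`I(X_A; W | X_B) = I(S; W) + I(X_A; W | X_B, S) + I(S; X_B | W)`: since `S` is a function of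
`X_A`, conditioning on `(X_B, S)` together with `X_A` is conditioning on `(X_A, X_B)`, and
independence of `X_A` and `X_B` (hence of `S` and `X_B`) factors `P[X_B, S]`. The last term is a
conditional mutual information, nonnegative by Gibbs' inequality `t - r ≤ t log (t / r)`.
-/

section Probability

variable (μ : Ω → ℝ)

lemma pr_congr {A B : Ω → Prop} (h : ∀ ω, A ω ↔ B ω) : pr μ A = pr μ B := by
  classical
  exact Finset.sum_congr rfl fun ω _ => if_congr (h ω) rfl rfl

variable {μ}

lemma pr_nonneg (hμ : ∀ ω, 0 ≤ μ ω) (A : Ω → Prop) : 0 ≤ pr μ A := by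
  classical
  exact Finset.sum_nonneg fun ω _ => ite_nonneg (hμ ω) le_rfl

lemma pr_mono (hμ : ∀ ω, 0 ≤ μ ω) {A B : Ω → Prop} (h : ∀ ω, A ω → B ω) :
    pr μ A ≤ pr μ B := by
  classical
  refine Finset.sum_le_sum fun ω _ => ?_
  split_ifs with hA hB
  · exact le_rfl
  · exact absurd (h ω hA) hB
  · exact hμ ω
  · exact le_rfl

lemma pr_pos (hμ : ∀ ω, 0 ≤ μ ω) {A : Ω → Prop} {ω₀ : Ω} (hA : A ω₀) (h0 : 0 < μ ω₀) :
    0 < pr μ A := by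
  classical
  refine h0.trans_le ?_
  simpa [pr, hA] using Finset.single_le_sum (f := fun ω => if A ω then μ ω else 0)
    (fun ω _ => ite_nonneg (hμ ω) le_rfl) (Finset.mem_univ ω₀)

open Classical in
lemma sum_pr_fiber_and {S : Type*} (X : Ω → S) (B : Ω → Prop) :
    ∑ x ∈ Finset.univ.image X, pr μ (fun ω => X ω = x ∧ B ω) = pr μ B := by
  simp only [pr]
  rw [Finset.sum_comm]
  refine Finset.sum_congr rfl fun ω _ => ?_
  by_cases hB : B ω <;> simp [hB]

open Classical in
lemma sum_pr_mul_eq_sum {α : Type*} {s : Finset α} {g : Ω → α} (hs : ∀ ω, g ω ∈ s)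
    {E : α → Ω → Prop} (hE : ∀ a ω, E a ω ↔ g ω = a) (f : α → ℝ) :
    ∑ a ∈ s, pr μ (E a) * f a = ∑ ω, μ ω * f (g ω) := by
  simp only [pr, Finset.sum_mul]
  rw [Finset.sum_comm]
  refine Finset.sum_congr rfl fun ω _ => ?_
  simp only [hE, ite_mul, zero_mul, Finset.sum_ite_eq, hs ω, if_true]

open Classical in
lemma sum_pr_fiber (hμ : ∑ ω, μ ω = 1) {S : Type*} (X : Ω → S) :
    ∑ x ∈ Finset.univ.image X, pr μ (fun ω => X ω = x) = 1 := by
  rw [← hμ]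
  simpa using sum_pr_mul_eq_sum (fun ω => Finset.mem_image_of_mem X (Finset.mem_univ ω))
    (fun x ω => Iff.rfl) (fun _ => (1 : ℝ))

end Probability

section Atoms

variable {μ : Ω → ℝ} {S T U : Type*}

def atomPr (μ : Ω → ℝ) (X : Ω → S) (ω : Ω) : ℝ := pr μ (fun ω' => X ω' = X ω)

lemma atomPr_pos (hμ : ∀ ω, 0 ≤ μ ω) (X : Ω → S) {ω : Ω} (h0 : 0 < μ ω) :
    0 < atomPr μ X ω :=
  pr_pos hμ rfl h0

lemma atomPr_congr {X : Ω → S} {Y : Ω → T} {ω : Ω} (h : ∀ ω', X ω' = X ω ↔ Y ω' = Y ω) :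
    atomPr μ X ω = atomPr μ Y ω :=
  pr_congr μ h

lemma Indep.atomPr_prod {X : Ω → S} {Y : Ω → T} (h : Indep μ X Y) (ω : Ω) :
    atomPr μ (fun ω => (X ω, Y ω)) ω = atomPr μ X ω * atomPr μ Y ω := by
  simp only [atomPr, Prod.mk.injEq]
  exact h _ _

open Classical in
lemma mi_eq_sum_log_atomPr (X : Ω → S) (Y : Ω → T) :
    mi μ X Y = ∑ ω, μ ω * Real.log
      (atomPr μ (fun ω => (X ω, Y ω)) ω / (atomPr μ X ω * atomPr μ Y ω)) := by
  rw [mi, ← Finset.sum_product']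
  rw [sum_pr_mul_eq_sum (g := fun ω => (X ω, Y ω)) (by simp) (by simp [Prod.ext_iff])]
  simp only [atomPr, Prod.mk.injEq]

open Classical in
lemma pr_mul_miOn (X : Ω → S) (Y : Ω → T) (B : Ω → Prop) :
    pr μ B * miOn μ X Y B = ∑ x ∈ Finset.univ.image X, ∑ y ∈ Finset.univ.image Y,
      pr μ (fun ω => X ω = x ∧ Y ω = y ∧ B ω) * Real.log
        (pr μ (fun ω => X ω = x ∧ Y ω = y ∧ B ω) * pr μ B /
          (pr μ (fun ω => X ω = x ∧ B ω) * pr μ (fun ω => Y ω = y ∧ B ω))) := by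
  simp only [miOn, cpr, Finset.mul_sum, and_assoc]
  refine Finset.sum_congr rfl fun x _ => Finset.sum_congr rfl fun y _ => ?_
  rcases eq_or_ne (pr μ B) 0 with hB | hB
  · simp [hB]
  · rw [← mul_assoc, mul_div_cancel₀ _ hB, div_mul_div_comm, div_div_eq_mul_div]
    congr 3
    field_simp

open Classical in
lemma cmi_eq_sum_log_atomPr (X : Ω → S) (Y : Ω → T) (Z : Ω → U) :
    cmi μ X Y Z = ∑ ω, μ ω * Real.log
      (atomPr μ (fun ω => (X ω, Y ω, Z ω)) ω * atomPr μ Z ω /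
        (atomPr μ (fun ω => (X ω, Z ω)) ω * atomPr μ (fun ω => (Y ω, Z ω)) ω)) := by
  simp only [cmi, pr_mul_miOn, ← Finset.sum_product']
  rw [sum_pr_mul_eq_sum (g := fun ω => (Z ω, X ω, Y ω)) (by simp)
    (fun p ω => by simp only [Prod.ext_iff]; tauto)]
  simp only [atomPr, Prod.mk.injEq]

end Atoms

section Nonneg

variable {μ : Ω → ℝ} {S T U : Type*}

lemma sub_le_mul_log_div {t r : ℝ} (ht : 0 ≤ t) (hr : 0 ≤ r) (h : 0 < t → 0 < r) :
    t - r ≤ t * Real.log (t / r) := by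
  rcases ht.eq_or_lt with rfl | ht
  · simpa using hr
  · have := mul_le_mul_of_nonneg_left (Real.one_sub_inv_le_log_of_pos (div_pos ht (h ht))) ht.le
    rwa [inv_div, mul_sub, mul_one, mul_div_cancel₀ _ ht.ne'] at this

open Classical in
lemma mi_nonneg (hμ : IsPmf μ) (X : Ω → S) (Y : Ω → T) : 0 ≤ mi μ X Y := by
  have hjoint : ∑ x ∈ Finset.univ.image X, ∑ y ∈ Finset.univ.image Y,
      pr μ (fun ω => X ω = x ∧ Y ω = y) = 1 := by
    rw [Finset.sum_comm]
    simp only [sum_pr_fiber_and X, sum_pr_fiber hμ.2 Y]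
  have hprod : ∑ x ∈ Finset.univ.image X, ∑ y ∈ Finset.univ.image Y,
      pr μ (fun ω => X ω = x) * pr μ (fun ω => Y ω = y) = 1 := by
    simp only [← Finset.mul_sum, sum_pr_fiber hμ.2, mul_one]
  calc 0 = ∑ x ∈ Finset.univ.image X, ∑ y ∈ Finset.univ.image Y,
        (pr μ (fun ω => X ω = x ∧ Y ω = y)
          - pr μ (fun ω => X ω = x) * pr μ (fun ω => Y ω = y)) := by
        simp only [Finset.sum_sub_distrib, hjoint, hprod, sub_self]
    _ ≤ mi μ X Y := by
      refine Finset.sum_le_sum fun x _ => Finset.sum_le_sum fun y _ =>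
        sub_le_mul_log_div (pr_nonneg hμ.1 _)
          (mul_nonneg (pr_nonneg hμ.1 _) (pr_nonneg hμ.1 _)) fun hxy => mul_pos ?_ ?_
      · exact hxy.trans_le (pr_mono hμ.1 fun ω h => h.1)
      · exact hxy.trans_le (pr_mono hμ.1 fun ω h => h.2)

open Classical in
def condPmf (μ : Ω → ℝ) (B : Ω → Prop) (ω : Ω) : ℝ := if B ω then μ ω / pr μ B else 0

lemma cpr_eq_pr_condPmf (A B : Ω → Prop) : cpr μ A B = pr (condPmf μ B) A := by
  classical
  simp only [cpr, pr, condPmf, Finset.sum_div]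
  refine Finset.sum_congr rfl fun ω _ => ?_
  by_cases hA : A ω <;> by_cases hB : B ω <;> simp [hA, hB]

lemma isPmf_condPmf (hμ : ∀ ω, 0 ≤ μ ω) {B : Ω → Prop} (hB : pr μ B ≠ 0) :
    IsPmf (condPmf μ B) := by
  classical
  refine ⟨fun ω => ite_nonneg (div_nonneg (hμ ω) (pr_nonneg hμ B)) le_rfl, ?_⟩
  rw [← div_self hB]
  simp only [condPmf, pr, Finset.sum_div, ite_div, zero_div]

lemma miOn_eq_mi_condPmf (X : Ω → S) (Y : Ω → T) (B : Ω → Prop) :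
    miOn μ X Y B = mi (condPmf μ B) X Y := by
  simp only [miOn, mi, cpr_eq_pr_condPmf]

lemma cmi_nonneg (hμ : ∀ ω, 0 ≤ μ ω) (X : Ω → S) (Y : Ω → T) (Z : Ω → U) :
    0 ≤ cmi μ X Y Z := by
  refine Finset.sum_nonneg fun z _ => ?_
  rcases eq_or_ne (pr μ fun ω => Z ω = z) 0 with hz | hz
  · simp [hz]
  · rw [miOn_eq_mi_condPmf]
    exact mul_nonneg (pr_nonneg hμ _) (mi_nonneg (isPmf_condPmf hμ hz) X Y)

end Nonneg

section Chain

variable {μ : Ω → ℝ} {S T U V : Type*}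

lemma Indep.symm {X : Ω → S} {Y : Ω → T} (h : Indep μ X Y) : Indep μ Y X := fun y x => by
  rw [pr_congr μ fun ω => and_comm, h, mul_comm]

open Classical in
lemma pr_comp_and (X : Ω → S) (P : S → Prop) (Q : Ω → Prop) :
    pr μ (fun ω => P (X ω) ∧ Q ω) =
      ∑ x ∈ Finset.univ.image X, if P x then pr μ (fun ω => X ω = x ∧ Q ω) else 0 := by
  rw [← sum_pr_fiber_and X]
  refine Finset.sum_congr rfl fun x _ => ?_
  split_ifs with hP
  · exact pr_congr μ fun ω => ⟨fun h => ⟨h.1, h.2.2⟩, fun h => ⟨h.1, h.1 ▸ hP, h.2⟩⟩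
  · exact Finset.sum_eq_zero fun ω _ => if_neg fun ⟨hx, hPx, _⟩ => hP (hx ▸ hPx)

open Classical in
lemma Indep.comp_left {X : Ω → S} {Y : Ω → T} (h : Indep μ X Y) (f : S → V) :
    Indep μ (fun ω => f (X ω)) Y := fun v y => by
  have hjoint := pr_comp_and (μ := μ) X (fun x => f x = v) (fun ω => Y ω = y)
  have hmarg : pr μ (fun ω => f (X ω) = v) =
      ∑ x ∈ Finset.univ.image X, if f x = v then pr μ (fun ω => X ω = x) else 0 := by
    simpa using pr_comp_and (μ := μ) X (fun x => f x = v) (fun _ => True)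
  show pr μ (fun ω => f (X ω) = v ∧ Y ω = y) = pr μ (fun ω => f (X ω) = v) * _
  rw [hjoint, hmarg, Finset.sum_mul]
  refine Finset.sum_congr rfl fun x _ => ?_
  split_ifs
  · exact h x y
  · rw [zero_mul]

lemma Indep.cmi_eq_mi_add_cmi_add_cmi (hμ : ∀ ω, 0 ≤ μ ω) {XA : Ω → S} {XB : Ω → T}
    (h : Indep μ XA XB) (W : Ω → U) (f : S → V) :
    cmi μ XA W XB = mi μ (fun ω => f (XA ω)) W + cmi μ XA W (fun ω => (XB ω, f (XA ω)))
      + cmi μ (fun ω => f (XA ω)) XB W := by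
  simp only [mi_eq_sum_log_atomPr, cmi_eq_sum_log_atomPr, ← Finset.sum_add_distrib, ← mul_add]
  refine Finset.sum_congr rfl fun ω _ => ?_
  rcases (hμ ω).eq_or_lt with h0 | h0
  · simp [← h0]
  have e1 : atomPr μ (fun ω => (XA ω, W ω, XB ω, f (XA ω))) ω =
      atomPr μ (fun ω => (XA ω, W ω, XB ω)) ω :=
    atomPr_congr fun ω' => by simp only [Prod.mk.injEq]; grind
  have e2 : atomPr μ (fun ω => (XA ω, XB ω, f (XA ω))) ω = atomPr μ (fun ω => (XA ω, XB ω)) ω :=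
    atomPr_congr fun ω' => by simp only [Prod.mk.injEq]; grind
  have e3 : atomPr μ (fun ω => (W ω, XB ω, f (XA ω))) ω =
      atomPr μ (fun ω => (f (XA ω), XB ω, W ω)) ω :=
    atomPr_congr fun ω' => by simp only [Prod.mk.injEq]; grind
  have e4 : atomPr μ (fun ω => (XB ω, W ω)) ω = atomPr μ (fun ω => (W ω, XB ω)) ω :=
    atomPr_congr fun ω' => by simp only [Prod.mk.injEq]; grind
  rw [e1, e2, e3, e4, (h.comp_left f).symm.atomPr_prod]
  simp only [Real.log_div, Real.log_mul, ne_eq, mul_eq_zero, (atomPr_pos hμ _ h0).ne', or_self,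
    not_false_eq_true]
  ring

end Chain

/-- Alice–Bob–Alice with complements: if `X_A` and `X_B` are (unconditionally)
independent and `S'` is any deterministic function of `X_A`'s values, then Alice's
total expected payment from revealing `S'(X_A)` in stage 1 and the rest of `X_A` in
stage 3 (after Bob reveals `X_B`) is at most her payment from revealing everything
in stage 3: `I(S'(X_A); W) + I(X_A; W | (X_B, S'(X_A))) ≤ I(X_A; W | X_B)`. -/
theorem aba_complements_reveal_late
    {SA SB T V : Type*} (μ : Ω → ℝ) (hμ : IsPmf μ)
    (W : Ω → T) (XA : Ω → SA) (XB : Ω → SB)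
    (h : Indep μ XA XB) (S' : SA → V) :
    mi μ (fun ω => S' (XA ω)) W +
        cmi μ XA W (fun ω => (XB ω, S' (XA ω)))
      ≤ cmi μ XA W XB := by
  rw [h.cmi_eq_mi_add_cmi_add_cmi hμ.1 W S']
  exact le_add_of_nonneg_right (cmi_nonneg hμ.1 _ XB W)
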